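/- Let S = {0 = s₀ < s₁ < … < s_n} be a compact distance set whose partition into blocks is {0} ∪ B₁ ∪ … ∪ B_k with k ≥ 2, let S⁺ = S∖B₁, and let L be a finite S⁺-metric space. Then the class of finite S-metric spaces spanned by L has the amalgamation property: for all finite S-metric spaces M, M', M'' spanned by L and all isometric embeddings f : M → M' and g : M → M'', there exist a finite S-metric space N spanned by L and isometric embeddings f' : M' → N and g' : M'' → N with f' ∘ f = g' ∘ g. -/

import Mathlib

/-- `s` is a jump number of the finite set `S = {0 = s₀ < s₁ < … < s_n}`. -/
def JumpNumber (S : Finset ℝ) (s : ℝ) : Prop :=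
  s ∈ S ∧ ∀ t ∈ S, s < t → 2 * s < t

/-- `x ≈ y`: `x` and `y` lie in the same block of `S`. -/
def SameBlock (S : Finset ℝ) (x y : ℝ) : Prop :=
  x ∈ S ∧ y ∈ S ∧
    ((x = 0 ∧ y = 0) ∨
      (x ≠ 0 ∧ y ≠ 0 ∧ ∀ j, JumpNumber S j → ¬ (min x y ≤ j ∧ j < max x y)))

/-- `S` is a compact distance set: for nonzero `x, y ∈ S`,
`|x − y| ≤ s₁` iff `x ≈ y`. -/
def CompactDistanceSet (S : Finset ℝ) (s1 : ℝ) : Prop :=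
  ∀ x ∈ S, ∀ y ∈ S, x ≠ 0 → y ≠ 0 → (|x - y| ≤ s1 ↔ SameBlock S x y)

/-- `d ∈ {0} ∪ B₁`, where `B₁` is the first nontrivial block of `S`. -/
def InLowBlock (S : Finset ℝ) (s1 d : ℝ) : Prop :=
  d = 0 ∨ SameBlock S d s1

/-- The `S⁺`-metric space `L` spans the `S`-metric space `M` (`L ≲ M`):
there is an isometric copy of `L` in `M` forming a transversal of the
partition of `M` into `∼`-classes, where `x ∼ y` iff `d(x,y) ∈ {0} ∪ B₁`;
i.e. every point of `M` is `∼`-equivalent to exactly one point of the copy. -/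
def Spans (S : Finset ℝ) (s1 : ℝ) (L : Type) [MetricSpace L]
    (M : Type) [MetricSpace M] : Prop :=
  ∃ τ : L → M, Isometry τ ∧
    ∀ m : M, ∃! a : L, InLowBlock S s1 (dist m (τ a))


/-!
Index the `∼`-classes of an `S`-metric space spanned by `L` by the points of `L`, and let
`δ = classDist s1` be the metric of `L` with `s₁` put on the diagonal. Then the distance of two
distinct points `p, q` lies in the block of `δ(cl p, cl q)`. Conversely, any symmetric function
whose values on distinct points lie in these blocks is a metric spanned by `L`: the triangle
inequality of `δ` passes to every choice of values in the blocks, which is where compactness of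
`S` enters. So the amalgam is `M'` together with `M'' ∖ g(M)`, a point of `M' ∖ f(M)` being put
at distance `δ` of the classes from every point of `M'' ∖ g(M)`.
-/

section Blocks

variable {S : Finset ℝ} {s1 x y z : ℝ}

theorem sameBlock_iff_forall_jumpNumber (hx : x ∈ S) (hy : y ∈ S) (hx0 : x ≠ 0)
    (hy0 : y ≠ 0) : SameBlock S x y ↔ ∀ j, JumpNumber S j → (x ≤ j ↔ y ≤ j) := by
  have key : ∀ j, ¬ (min x y ≤ j ∧ j < max x y) ↔ (x ≤ j ↔ y ≤ j) := fun j => by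
    simp only [min_le_iff, lt_max_iff]
    by_cases hxj : x ≤ j <;> by_cases hyj : y ≤ j <;> simp [*, not_le.1]
  simp only [SameBlock, hx, hy, hx0, hy0, key, ne_eq, not_false_eq_true, true_and, false_and,
    false_or]

theorem SameBlock.eq_zero_iff (h : SameBlock S x y) : x = 0 ↔ y = 0 := by
  rcases h.2.2 with ⟨hx, hy⟩ | ⟨hx, hy, -⟩ <;> simp [*]

theorem sameBlock_refl (hx : x ∈ S) (hx0 : x ≠ 0) : SameBlock S x x :=
  (sameBlock_iff_forall_jumpNumber hx hx hx0 hx0).2 fun _ _ => Iff.rfl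

theorem SameBlock.symm (h : SameBlock S x y) : SameBlock S y x := by
  by_cases hx0 : x = 0
  · exact ⟨h.2.1, h.1, Or.inl ⟨h.eq_zero_iff.1 hx0, hx0⟩⟩
  have hy0 : y ≠ 0 := mt h.eq_zero_iff.2 hx0
  have hsep := (sameBlock_iff_forall_jumpNumber h.1 h.2.1 hx0 hy0).1 h
  exact (sameBlock_iff_forall_jumpNumber h.2.1 h.1 hy0 hx0).2 fun j hj => (hsep j hj).symm

theorem SameBlock.trans (h₁ : SameBlock S x y) (h₂ : SameBlock S y z) : SameBlock S x z := by
  by_cases hx0 : x = 0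
  · exact ⟨h₁.1, h₂.2.1, Or.inl ⟨hx0, h₂.eq_zero_iff.1 (h₁.eq_zero_iff.1 hx0)⟩⟩
  have hy0 : y ≠ 0 := mt h₁.eq_zero_iff.2 hx0
  have hz0 : z ≠ 0 := mt h₂.eq_zero_iff.2 hy0
  have hsep₁ := (sameBlock_iff_forall_jumpNumber h₁.1 h₁.2.1 hx0 hy0).1 h₁
  have hsep₂ := (sameBlock_iff_forall_jumpNumber h₂.1 h₂.2.1 hy0 hz0).1 h₂
  exact (sameBlock_iff_forall_jumpNumber h₁.1 h₂.2.1 hx0 hz0).2 fun j hj =>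
    (hsep₁ j hj).trans (hsep₂ j hj)

theorem SameBlock.inLowBlock_iff (h : SameBlock S x y) :
    InLowBlock S s1 x ↔ InLowBlock S s1 y :=
  or_congr h.eq_zero_iff ⟨h.symm.trans, h.trans⟩

theorem two_mul_min_lt_max_of_not_sameBlock (hx : x ∈ S) (hy : y ∈ S) (hx0 : x ≠ 0)
    (hy0 : y ≠ 0) (h : ¬ SameBlock S x y) : 2 * min x y < max x y := by
  by_contra hle
  refine h ⟨hx, hy, Or.inr ⟨hx0, hy0, fun j hj ⟨hmin, hmax⟩ => hle ?_⟩⟩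
  have hmem : max x y ∈ S := by rcases max_choice x y with h | h <;> rw [h] <;> assumption
  linarith [hj.2 _ hmem hmax]

end Blocks

structure IsCompactDistanceSet (S : Finset ℝ) (s1 : ℝ) : Prop where
  mem : s1 ∈ S
  pos : 0 < s1
  le_of_mem : ∀ s ∈ S, s ≠ 0 → s1 ≤ s
  compact : CompactDistanceSet S s1

namespace IsCompactDistanceSet

variable {S : Finset ℝ} {s1 : ℝ} (hS : IsCompactDistanceSet S s1)
include hS

theorem abs_sub_le {x y : ℝ} (h : SameBlock S x y) : |x - y| ≤ s1 := by
  rcases h.2.2 with ⟨rfl, rfl⟩ | ⟨hx0, hy0, -⟩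
  · simpa using hS.pos.le
  · exact (hS.compact x h.1 y h.2.1 hx0 hy0).2 h

theorem le_of_sameBlock {x y : ℝ} (h : SameBlock S x y) (hy0 : y ≠ 0) : s1 ≤ x :=
  hS.le_of_mem x h.1 (mt h.eq_zero_iff.1 hy0)

/-- A jump `j ≥ s₁` lies above both summands, and the next element of `S` is beyond `2 j`. -/
theorem inLowBlock_of_le_add {d d₁ d₂ : ℝ} (h₁ : InLowBlock S s1 d₁)
    (h₂ : InLowBlock S s1 d₂) (hd : d ∈ S) (hle : d ≤ d₁ + d₂) : InLowBlock S s1 d := by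
  rcases eq_or_ne d 0 with hd0 | hd0
  · exact Or.inl hd0
  have hs1d := hS.le_of_mem d hd hd0
  refine Or.inr ⟨hd, hS.mem, Or.inr ⟨hd0, hS.pos.ne', fun j hj ⟨hjmin, hjmax⟩ => ?_⟩⟩
  rw [min_eq_right hs1d] at hjmin
  rw [max_eq_left hs1d] at hjmax
  have below : ∀ {e}, InLowBlock S s1 e → e ≤ j := by
    rintro e (rfl | ⟨-, -, ⟨-, rfl⟩ | ⟨-, -, hsep⟩⟩)
    · linarith [hS.pos]
    · exact absurd rfl hS.pos.ne'
    · by_contra! hej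
      exact hsep j hj ⟨(min_le_right e s1).trans hjmin, hej.trans_le (le_max_left e s1)⟩
  linarith [hj.2 d hd hjmax, below h₁, below h₂]

theorem two_mul_lt_of_add_lt {D₁ D₂ e₁ e₂ : ℝ} (h₁ : SameBlock S D₁ e₁)
    (h₂ : SameBlock S D₂ e₂) (he₁ : e₁ ≠ 0) (hlt : D₁ + s1 < D₂) : 2 * e₁ < e₂ := by
  have hD₁ := hS.le_of_sameBlock h₁ he₁
  have hD₂ : 0 < D₂ := by linarith [hS.pos]
  have hD : ¬ SameBlock S D₁ D₂ := fun h => by linarith [(abs_le.1 (hS.abs_sub_le h)).1]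
  have he : ¬ SameBlock S e₁ e₂ := fun h => hD ((h₁.trans h).trans h₂.symm)
  have hgap := two_mul_min_lt_max_of_not_sameBlock h₁.2.1 h₂.2.1 he₁
    (mt h₂.eq_zero_iff.2 hD₂.ne') he
  have a₁ := abs_le.1 (hS.abs_sub_le h₁)
  have a₂ := abs_le.1 (hS.abs_sub_le h₂)
  rcases le_total e₁ e₂ with h | h
  · rwa [min_eq_left h, max_eq_right h] at hgap
  · rw [min_eq_right h, max_eq_left h] at hgap
    linarith

theorem le_add_of_sameBlock {D₁ D₂ D₃ e₁ e₂ e₃ : ℝ} (h₁ : SameBlock S D₁ e₁)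
    (h₂ : SameBlock S D₂ e₂) (h₃ : SameBlock S D₃ e₃) (he₁ : e₁ ≠ 0) (he₂ : e₂ ≠ 0)
    (htri : e₃ ≤ e₁ + e₂) : D₃ ≤ D₁ + D₂ := by
  by_contra! hlt
  have hD₁ := hS.le_of_sameBlock h₁ he₁
  have hD₂ := hS.le_of_sameBlock h₂ he₂
  have := hS.two_mul_lt_of_add_lt h₁ h₃ he₁ (by linarith)
  have := hS.two_mul_lt_of_add_lt h₂ h₃ he₂ (by linarith)
  linarith

end IsCompactDistanceSet

noncomputable def classDist {L : Type} [MetricSpace L] (s1 : ℝ) (a b : L) : ℝ :=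
  open Classical in if a = b then s1 else dist a b

section ClassDist

variable {S : Finset ℝ} {s1 : ℝ} {L : Type} [MetricSpace L] {a b c : L}

theorem classDist_self : classDist s1 a a = s1 := if_pos rfl

theorem classDist_of_ne (h : a ≠ b) : classDist s1 a b = dist a b := if_neg h

theorem classDist_comm : classDist s1 a b = classDist s1 b a := by
  by_cases h : a = b
  · rw [h]
  · rw [classDist_of_ne h, classDist_of_ne (Ne.symm h), dist_comm]

theorem dist_le_classDist (hs1 : 0 ≤ s1) : dist a b ≤ classDist s1 a b := by
  by_cases h : a = b
  · rw [h, dist_self, classDist_self]; exact hs1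
  · rw [classDist_of_ne h]

namespace IsCompactDistanceSet

variable (hS : IsCompactDistanceSet S s1)
include hS

theorem classDist_ne_zero : classDist s1 a b ≠ 0 := by
  by_cases h : a = b
  · rw [h, classDist_self]; exact hS.pos.ne'
  · rw [classDist_of_ne h]; exact dist_ne_zero.2 h

section

variable (hLS : ∀ a b : L, dist a b ∈ S)
include hLS

theorem classDist_mem : classDist s1 a b ∈ S := by
  by_cases h : a = b
  · rw [h, classDist_self]; exact hS.mem
  · rw [classDist_of_ne h]; exact hLS a b

theorem le_classDist : s1 ≤ classDist s1 a b :=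
  hS.le_of_mem _ (hS.classDist_mem hLS) hS.classDist_ne_zero

theorem classDist_triangle : classDist s1 a c ≤ classDist s1 a b + classDist s1 b c := by
  have hab := hS.le_classDist hLS (a := a) (b := b)
  have hbc := hS.le_classDist hLS (a := b) (b := c)
  by_cases h : a = c
  · subst h; rw [classDist_self]; linarith [hS.pos]
  · rw [classDist_of_ne h]
    linarith [dist_triangle a b c, dist_le_classDist hS.pos.le (a := a) (b := b),
      dist_le_classDist hS.pos.le (a := b) (b := c)]

end

theorem inLowBlock_classDist_iff
    (hLplus : ∀ a b : L, dist a b = 0 ∨ ¬ SameBlock S (dist a b) s1) :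
    InLowBlock S s1 (classDist s1 a b) ↔ a = b := by
  by_cases h : a = b
  · rw [h, classDist_self]; exact iff_of_true (Or.inr (sameBlock_refl hS.mem hS.pos.ne')) rfl
  · rw [classDist_of_ne h]
    refine iff_of_false ?_ h
    rintro (h0 | hsb)
    · exact h (dist_eq_zero.1 h0)
    · exact ((hLplus a b).resolve_left (dist_ne_zero.2 h)) hsb

end IsCompactDistanceSet

end ClassDist

def ClassCompatible {X L : Type} [MetricSpace L] (S : Finset ℝ) (s1 : ℝ) (cl : X → L)
    (d : X → X → ℝ) : Prop :=
  ∀ p q, p ≠ q → SameBlock S (d p q) (classDist s1 (cl p) (cl q))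

namespace ClassCompatible

variable {S : Finset ℝ} {s1 : ℝ} {X L : Type} [MetricSpace L] {cl : X → L}
  {d : X → X → ℝ}
  (hd : ClassCompatible S s1 cl d) (hS : IsCompactDistanceSet S s1)
include hd hS

theorem pos {p q : X} (hpq : p ≠ q) : 0 < d p q :=
  hS.pos.trans_le (hS.le_of_sameBlock (hd p q hpq) hS.classDist_ne_zero)

theorem triangle (hLS : ∀ a b : L, dist a b ∈ S) (hd0 : ∀ p, d p p = 0) (p q r : X) :
    d p r ≤ d p q + d q r := by
  rcases eq_or_ne p q with rfl | hpq
  · rw [hd0, zero_add]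
  rcases eq_or_ne q r with rfl | hqr
  · rw [hd0, add_zero]
  rcases eq_or_ne p r with rfl | hpr
  · rw [hd0]; linarith [hd.pos hS hpq, hd.pos hS hqr]
  exact hS.le_add_of_sameBlock (hd p q hpq) (hd q r hqr) (hd p r hpr) hS.classDist_ne_zero
    hS.classDist_ne_zero (hS.classDist_triangle hLS)

theorem inLowBlock_iff (hLplus : ∀ a b : L, dist a b = 0 ∨ ¬ SameBlock S (dist a b) s1)
    (hd0 : ∀ p, d p p = 0) {p q : X} : InLowBlock S s1 (d p q) ↔ cl p = cl q := by
  rcases eq_or_ne p q with rfl | hpq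
  · exact iff_of_true (Or.inl (hd0 p)) rfl
  · exact (hd p q hpq).inLowBlock_iff.trans (hS.inLowBlock_classDist_iff hLplus)

noncomputable abbrev toMetricSpace (hLS : ∀ a b : L, dist a b ∈ S) (hd0 : ∀ p, d p p = 0)
    (hcomm : ∀ p q, d p q = d q p) : MetricSpace X where
  dist := d
  dist_self := hd0
  dist_comm := hcomm
  dist_triangle := hd.triangle hS hLS hd0
  eq_of_dist_eq_zero {p q} h := by
    by_contra hpq
    exact (hd.pos hS hpq).ne' h

omit hd in
theorem spans [MetricSpace X] (hd : ClassCompatible S s1 cl dist)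
    (hLplus : ∀ a b : L, dist a b = 0 ∨ ¬ SameBlock S (dist a b) s1) (κ : L → X)
    (hκ : Isometry κ) (hclκ : ∀ a, cl (κ a) = a) : Spans S s1 L X := by
  refine ⟨κ, hκ, fun x => ⟨cl x, ?_, fun a ha => ?_⟩⟩
  · exact (hd.inLowBlock_iff hS hLplus dist_self).2 (hclκ _).symm
  · rw [← hclκ a]
    exact ((hd.inLowBlock_iff hS hLplus dist_self).1 ha).symm

end ClassCompatible

def IsClassMap {X L : Type} [MetricSpace X] (S : Finset ℝ) (s1 : ℝ) (κ : L → X)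
    (cl : X → L) : Prop :=
  ∀ x a, InLowBlock S s1 (dist x (κ a)) ↔ cl x = a

section ClassMap

variable {S : Finset ℝ} {s1 : ℝ} {X L : Type} [MetricSpace X] {κ : L → X} {cl : X → L}

theorem IsClassMap.apply_self (hcl : IsClassMap S s1 κ cl) (a : L) : cl (κ a) = a :=
  (hcl (κ a) a).1 (Or.inl (dist_self _))

variable (hS : IsCompactDistanceSet S s1) (hXS : ∀ x y : X, dist x y ∈ S)
include hS hXS

theorem IsCompactDistanceSet.sameBlock_dist_of_inLowBlock {x x₀ y y₀ : X}
    (hx : InLowBlock S s1 (dist x x₀)) (hy : InLowBlock S s1 (dist y y₀))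
    (h₀ : ¬ InLowBlock S s1 (dist x₀ y₀)) : SameBlock S (dist x y) (dist x₀ y₀) := by
  have hxy : ¬ InLowBlock S s1 (dist x y) := fun h => h₀ <|
    hS.inLowBlock_of_le_add (hS.inLowBlock_of_le_add (by rwa [dist_comm]) h (hXS x₀ y)
      (dist_triangle x₀ x y)) hy (hXS x₀ y₀) (dist_triangle x₀ y y₀)
  by_contra hne
  have hgap := two_mul_min_lt_max_of_not_sameBlock (hXS x y) (hXS x₀ y₀)
    (fun h => hxy (Or.inl h)) (fun h => h₀ (Or.inl h)) hne
  have hspread : max (dist x y) (dist x₀ y₀) - min (dist x y) (dist x₀ y₀) ≤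
      dist x x₀ + dist y y₀ := by
    rw [max_sub_min_eq_abs, ← Real.dist_eq, dist_comm]
    exact dist_dist_dist_le x y x₀ y₀
  have hmin := hS.inLowBlock_of_le_add (d := min (dist x y) (dist x₀ y₀)) hx hy (by
    rcases min_choice (dist x y) (dist x₀ y₀) with h | h <;> rw [h] <;> apply hXS) (by linarith)
  rcases min_choice (dist x y) (dist x₀ y₀) with h | h <;> rw [h] at hmin
  exacts [hxy hmin, h₀ hmin]

theorem IsClassMap.inLowBlock_dist_iff (hcl : IsClassMap S s1 κ cl) {x y : X} :
    InLowBlock S s1 (dist x y) ↔ cl x = cl y := by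
  refine ⟨fun h => (hcl x _).1 (hS.inLowBlock_of_le_add h ((hcl y _).2 rfl) (hXS _ _)
    (dist_triangle _ _ _)), fun h => hS.inLowBlock_of_le_add ((hcl x (cl y)).2 h) ?_ (hXS _ _)
    (dist_triangle _ _ _)⟩
  rw [dist_comm]
  exact (hcl y _).2 rfl

theorem IsClassMap.classCompatible [MetricSpace L] (hcl : IsClassMap S s1 κ cl)
    (hκ : Isometry κ) : ClassCompatible S s1 cl dist := by
  intro p q hpq
  by_cases h : cl p = cl q
  · rw [h, classDist_self]
    exact ((hcl.inLowBlock_dist_iff hS hXS).2 h).resolve_left (dist_ne_zero.2 hpq)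
  · rw [classDist_of_ne h, ← hκ.dist_eq]
    refine hS.sameBlock_dist_of_inLowBlock hXS ((hcl p _).2 rfl) ((hcl q _).2 rfl) ?_
    rwa [hcl.inLowBlock_dist_iff hS hXS, hcl.apply_self, hcl.apply_self]

/-- Distinct points of the copy `κ` lie in distinct classes, so by counting it meets them all. -/
theorem IsCompactDistanceSet.exists_isClassMap [MetricSpace L] [Finite L]
    (hLplus : ∀ a b : L, dist a b = 0 ∨ ¬ SameBlock S (dist a b) s1) (hsp : Spans S s1 L X)
    (hκ : Isometry κ) : ∃ cl, IsClassMap S s1 κ cl := by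
  obtain ⟨τ, -, hτ⟩ := hsp
  choose cl₀ hcl₀ using hτ
  have hcl₀map : IsClassMap S s1 τ cl₀ := fun x a =>
    ⟨fun h => ((hcl₀ x).2 a h).symm, fun h => h ▸ (hcl₀ x).1⟩
  have hinj : Function.Injective (cl₀ ∘ κ) := fun a b hab => by
    have hlow := (hcl₀map.inLowBlock_dist_iff hS hXS).2 hab
    rw [hκ.dist_eq] at hlow
    rcases hlow with h | h
    · exact dist_eq_zero.1 h
    · exact dist_eq_zero.1 ((hLplus a b).resolve_right (not_not_intro h))
  let e := Equiv.ofBijective _ hinj.bijective_of_finite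
  refine ⟨e.symm ∘ cl₀, fun x a => ?_⟩
  rw [hcl₀map.inLowBlock_dist_iff hS hXS, Function.comp_apply, Equiv.symm_apply_eq]
  rfl

end ClassMap

abbrev Amalgam {M M'' : Type} (M' : Type) (g : M → M'') : Type :=
  M' ⊕ {y : M'' // y ∉ Set.range g}

section Amalgam

variable {L M M' M'' : Type} (s1 : ℝ) (f : M → M') (g : M → M'') (cl' : M' → L)
  (cl'' : M'' → L)

def amalgamClass : Amalgam M' g → L := Sum.elim cl' (cl'' ∘ Subtype.val)

noncomputable def amalgamRight (y : M'') : Amalgam M' g :=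
  open Classical in
  if h : y ∈ Set.range g then .inl (f h.choose) else .inr ⟨y, h⟩

variable {f g} in
theorem amalgamRight_apply (hg : Function.Injective g) (m : M) :
    amalgamRight f g (g m) = .inl (f m) := by
  have h : g m ∈ Set.range g := ⟨m, rfl⟩
  rw [amalgamRight, dif_pos h, hg h.choose_spec]

variable {f g} in
theorem amalgamRight_of_notMem {y : M''} (hy : y ∉ Set.range g) :
    amalgamRight f g y = .inr ⟨y, hy⟩ :=
  dif_neg hy

variable [MetricSpace L] [MetricSpace M'']

noncomputable def crossDist (x : M') (y : M'') : ℝ :=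
  open Classical in
  if h : x ∈ Set.range f then dist (g h.choose) y else classDist s1 (cl' x) (cl'' y)

variable [MetricSpace M']

noncomputable def amalgamDist : Amalgam M' g → Amalgam M' g → ℝ
  | .inl x, .inl x' => dist x x'
  | .inl x, .inr y => crossDist s1 f g cl' cl'' x y
  | .inr y, .inl x => crossDist s1 f g cl' cl'' x y
  | .inr y, .inr y' => dist (y : M'') y'

variable {s1 f g cl' cl''}

omit [MetricSpace M'] in
theorem crossDist_apply (hf : Function.Injective f) (m : M) (y : M'') :
    crossDist s1 f g cl' cl'' (f m) y = dist (g m) y := by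
  have h : f m ∈ Set.range f := ⟨m, rfl⟩
  rw [crossDist, dif_pos h, hf h.choose_spec]

omit [MetricSpace M'] in
theorem crossDist_of_notMem {x : M'} (hx : x ∉ Set.range f) (y : M'') :
    crossDist s1 f g cl' cl'' x y = classDist s1 (cl' x) (cl'' y) :=
  dif_neg hx

theorem amalgamDist_self (p : Amalgam M' g) : amalgamDist s1 f g cl' cl'' p p = 0 := by
  rcases p with x | y
  exacts [dist_self x, dist_self (y : M'')]

theorem amalgamDist_comm (p q : Amalgam M' g) :
    amalgamDist s1 f g cl' cl'' p q = amalgamDist s1 f g cl' cl'' q p := by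
  rcases p with x | y <;> rcases q with x' | y'
  exacts [dist_comm x x', rfl, rfl, dist_comm (y : M'') y']

theorem amalgamDist_amalgamRight [MetricSpace M] (hf : Isometry f) (hg : Isometry g) (y y' : M'') :
    amalgamDist s1 f g cl' cl'' (amalgamRight f g y) (amalgamRight f g y') = dist y y' := by
  by_cases hy : y ∈ Set.range g <;> by_cases hy' : y' ∈ Set.range g
  · obtain ⟨m, rfl⟩ := hy
    obtain ⟨m', rfl⟩ := hy'
    rw [amalgamRight_apply hg.injective, amalgamRight_apply hg.injective]
    exact (hf.dist_eq m m').trans (hg.dist_eq m m').symm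
  · obtain ⟨m, rfl⟩ := hy
    rw [amalgamRight_apply hg.injective, amalgamRight_of_notMem hy']
    exact crossDist_apply hf.injective m y'
  · obtain ⟨m', rfl⟩ := hy'
    rw [amalgamRight_apply hg.injective, amalgamRight_of_notMem hy, dist_comm]
    exact crossDist_apply hf.injective m' y
  · rw [amalgamRight_of_notMem hy, amalgamRight_of_notMem hy']
    rfl

variable {S : Finset ℝ} (hS : IsCompactDistanceSet S s1) (hLS : ∀ a b : L, dist a b ∈ S)
  (hf : Function.Injective f)
include hS hLS hf

theorem amalgamDist_mem (hM'S : ∀ x x' : M', dist x x' ∈ S)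
    (hM''S : ∀ y y' : M'', dist y y' ∈ S) (p q : Amalgam M' g) :
    amalgamDist s1 f g cl' cl'' p q ∈ S := by
  have hcross : ∀ x y, crossDist s1 f g cl' cl'' x y ∈ S := fun x y => by
    by_cases hx : x ∈ Set.range f
    · obtain ⟨m, rfl⟩ := hx
      rw [crossDist_apply hf]
      exact hM''S _ _
    · rw [crossDist_of_notMem hx]
      exact hS.classDist_mem hLS
  rcases p with x | y <;> rcases q with x' | y'
  exacts [hM'S x x', hcross x y', hcross x' y, hM''S y y']

theorem classCompatible_amalgamDist (h' : ClassCompatible S s1 cl' dist)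
    (h'' : ClassCompatible S s1 cl'' dist) (hfg : ∀ m, cl'' (g m) = cl' (f m)) :
    ClassCompatible S s1 (amalgamClass g cl' cl'') (amalgamDist s1 f g cl' cl'') := by
  have hcross : ∀ x (y : {y : M'' // y ∉ Set.range g}),
      SameBlock S (crossDist s1 f g cl' cl'' x y) (classDist s1 (cl' x) (cl'' y)) := by
    rintro x ⟨y, hy⟩
    by_cases hx : x ∈ Set.range f
    · obtain ⟨m, rfl⟩ := hx
      rw [crossDist_apply hf, ← hfg]
      exact h'' _ _ fun h => hy ⟨m, h⟩
    · rw [crossDist_of_notMem hx]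
      exact sameBlock_refl (hS.classDist_mem hLS) hS.classDist_ne_zero
  rintro (x | y) (x' | y') hne
  · exact h' x x' fun h => hne (congrArg _ h)
  · exact hcross x y'
  · rw [amalgamClass, Sum.elim_inr, Sum.elim_inl, classDist_comm]
    exact hcross x' y
  · exact h'' y y' fun h => hne (congrArg _ (Subtype.ext h))

end Amalgam

theorem stmt18_general (S : Finset ℝ)
    (s1 : ℝ) (hs1S : s1 ∈ S) (hs1pos : 0 < s1)
    (hs1min : ∀ s ∈ S, s ≠ 0 → s1 ≤ s)
    (hcds : CompactDistanceSet S s1)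
    -- `L` is a finite `S⁺`-metric space, `S⁺ = S∖B₁`
    (L : Type) [MetricSpace L] (hLfin : Finite L)
    (hLS : ∀ x y : L, dist x y ∈ S)
    (hLplus : ∀ x y : L, dist x y = 0 ∨ ¬ SameBlock S (dist x y) s1)
    -- `M`, `M'`, `M''` are finite `S`-metric spaces spanned by `L`
    (M : Type) [MetricSpace M] (hMsp : Spans S s1 L M)
    (M' : Type) [MetricSpace M'] (hM' : Finite M')
    (hM'S : ∀ x y : M', dist x y ∈ S) (hM'sp : Spans S s1 L M')
    (M'' : Type) [MetricSpace M''] (hM'' : Finite M'')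
    (hM''S : ∀ x y : M'', dist x y ∈ S) (hM''sp : Spans S s1 L M'')
    (f : M → M') (hf : Isometry f) (g : M → M'') (hg : Isometry g) :
    ∃ (N : Type) (_ : MetricSpace N), Finite N ∧
      (∀ x y : N, dist x y ∈ S) ∧ Spans S s1 L N ∧
      ∃ (f' : M' → N) (g' : M'' → N), Isometry f' ∧ Isometry g' ∧
        ∀ x : M, f' (f x) = g' (g x) := by
  have hS : IsCompactDistanceSet S s1 := ⟨hs1S, hs1pos, hs1min, hcds⟩
  obtain ⟨τ, hτ, -⟩ := hMsp
  obtain ⟨cl', hcl'⟩ := hS.exists_isClassMap hM'S hLplus hM'sp (hf.comp hτ)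
  obtain ⟨cl'', hcl''⟩ := hS.exists_isClassMap hM''S hLplus hM''sp (hg.comp hτ)
  have hfg : ∀ m, cl'' (g m) = cl' (f m) := fun m => (hcl'' (g m) _).1 <| by
    simpa only [Function.comp_apply, hf.dist_eq, hg.dist_eq] using (hcl' (f m) _).2 rfl
  have hN := classCompatible_amalgamDist hS hLS hf.injective
    (hcl'.classCompatible hS hM'S (hf.comp hτ)) (hcl''.classCompatible hS hM''S (hg.comp hτ)) hfg
  let _ : MetricSpace (Amalgam M' g) :=
    hN.toMetricSpace hS hLS amalgamDist_self amalgamDist_comm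
  refine ⟨Amalgam M' g, inferInstance, inferInstance,
    amalgamDist_mem hS hLS hf.injective hM'S hM''S,
    hN.spans hS hLplus (fun a => .inl (f (τ a)))
      (Isometry.of_dist_eq fun a b => (hf.comp hτ).dist_eq a b) hcl'.apply_self,
    .inl, amalgamRight f g, Isometry.of_dist_eq fun _ _ => rfl,
    Isometry.of_dist_eq (amalgamDist_amalgamRight hf hg),
    fun m => (amalgamRight_apply hg.injective m).symm⟩

theorem stmt18 (S : Finset ℝ) (h0 : (0 : ℝ) ∈ S) (hnn : ∀ s ∈ S, 0 ≤ s)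
    (s1 : ℝ) (hs1S : s1 ∈ S) (hs1pos : 0 < s1)
    (hs1min : ∀ s ∈ S, s ≠ 0 → s1 ≤ s)
    (hcds : CompactDistanceSet S s1)
    -- `S` has at least two nontrivial blocks (`k ≥ 2`)
    (htwo : ∃ x ∈ S, x ≠ 0 ∧ ¬ SameBlock S x s1)
    -- `L` is a finite `S⁺`-metric space, `S⁺ = S∖B₁`
    (L : Type) [MetricSpace L] (hLfin : Finite L)
    (hLS : ∀ x y : L, dist x y ∈ S)
    (hLplus : ∀ x y : L, dist x y = 0 ∨ ¬ SameBlock S (dist x y) s1)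
    -- `M`, `M'`, `M''` are finite `S`-metric spaces spanned by `L`
    (M : Type) [MetricSpace M] (hM : Finite M)
    (hMS : ∀ x y : M, dist x y ∈ S) (hMsp : Spans S s1 L M)
    (M' : Type) [MetricSpace M'] (hM' : Finite M')
    (hM'S : ∀ x y : M', dist x y ∈ S) (hM'sp : Spans S s1 L M')
    (M'' : Type) [MetricSpace M''] (hM'' : Finite M'')
    (hM''S : ∀ x y : M'', dist x y ∈ S) (hM''sp : Spans S s1 L M'')
    (f : M → M') (hf : Isometry f) (g : M → M'') (hg : Isometry g) :
    ∃ (N : Type) (_ : MetricSpace N), Finite N ∧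
      (∀ x y : N, dist x y ∈ S) ∧ Spans S s1 L N ∧
      ∃ (f' : M' → N) (g' : M'' → N), Isometry f' ∧ Isometry g' ∧
        ∀ x : M, f' (f x) = g' (g x) :=
  stmt18_general S s1 hs1S hs1pos hs1min hcds L hLfin hLS hLplus M hMsp M' hM' hM'S hM'sp M'' hM''
    hM''S hM''sp f hf g hg
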